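/- arXiv:2604.21273 — 7 statements merged into one kernel-verified Lean document; each statement's English description precedes it below -/
import Mathlib

section
/- The function K(t) = 6 − 18t + 2.7t² + 6t√(3t) is strictly positive for all t ∈ [0,1]. -/
theorem stmt3 :
    ∀ t ∈ Set.Icc (0 : ℝ) 1,
      0 < 6 - 18 * t + 2.7 * t ^ 2 + 6 * t * Real.sqrt (3 * t) := by
  intro t ht
  obtain ⟨h0, h1⟩ := ht
  set s := Real.sqrt (3 * t) with hs
  have hs0 : 0 ≤ s := Real.sqrt_nonneg _
  have hs2 : s ^ 2 = 3 * t := Real.sq_sqrt (by linarith)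
  have hs3 : s ^ 2 ≤ 3 := by rw [hs2]; linarith
  nlinarith [sq_nonneg (s - 1), sq_nonneg (s^2 + 2*s - 3), sq_nonneg (s^2 - s), sq_nonneg s, mul_nonneg hs0 (sq_nonneg (s-1)), sq_nonneg (s^2 + 3*s - 4)]
end

section
/- Define continuous functions on [0,1] by p(t) = s(t) = x(t) = y(t) = 1, q(t) = 1 + t, r(t) = 1 + 2t, v(t) = 1 − 0.9t, a(t) = b(t) = c(t) = √(3t), u(t) = (6 + 14.7t²)/(6(1+t)), z(t) = (6 + 12.3t²)/(6(1+2t)(1−0.9t)), and K(t) = 6 − 18t + 2.7t² + 6t√(3t)). Then for every t ∈ [0,1]: (i) 6p(t)s(t)x(t) − b(t)²(2s(t)+v(t)) − a(t)²(2x(t)+y(t)) + 2a(t)b(t)c(t) = K(t); (ii) 6q(t)u(t)y(t) − c(t)²(2q(t)+r(t)) − a(t)²(x(t)+2y(t)) + 2a(t)b(t)c(t) = K(t); (iii) 6r(t)v(t)z(t) − c(t)²(q(t)+2r(t)) − b(t)²(s(t)+2v(t)) + 2a(t)b(t)c(t) = K(t); (iv) all of p,q,r,s,u,v,x,y,z are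 strictly positive on [0,1] and K(t) > 0 on [0,1]; (v) at t = 0 one has q = r = u = v = 1 and a = b = c = 0; and (vi) 3p(1)x(1) − b(1)² = 0 while 3p(0)x(0) − b(0)² = 3 > 0. -/
namespace VbMAPath

noncomputable section

def p (_t : ℝ) : ℝ := 1
def s (_t : ℝ) : ℝ := 1
def x (_t : ℝ) : ℝ := 1
def y (_t : ℝ) : ℝ := 1
def q (t : ℝ) : ℝ := 1 + t
def r (t : ℝ) : ℝ := 1 + 2 * t
def v (t : ℝ) : ℝ := 1 - 0.9 * t
def a (t : ℝ) : ℝ := Real.sqrt (3 * t)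
def b (t : ℝ) : ℝ := Real.sqrt (3 * t)
def c (t : ℝ) : ℝ := Real.sqrt (3 * t)
def u (t : ℝ) : ℝ := (6 + 14.7 * t ^ 2) / (6 * (1 + t))
def z (t : ℝ) : ℝ := (6 + 12.3 * t ^ 2) / (6 * (1 + 2 * t) * (1 - 0.9 * t))
def K (t : ℝ) : ℝ := 6 - 18 * t + 2.7 * t ^ 2 + 6 * t * Real.sqrt (3 * t)

/- With `w = √(3t)` all of `a, b, c` equal `w` and `t = w² / 3`, so each identity is a polynomial
identity in `w` once `w² = 3t` is used, and `K` becomes the quartic `6 - 6w² + 2w³ + 0.3w⁴`,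
which is positive for every `w ≥ 0` (its minimum on `w ≥ 0`, near `w ≈ 1.53`, is about `0.76`). -/

theorem quartic_pos {w : ℝ} (hw : 0 ≤ w) : 0 < 6 - 6 * w ^ 2 + 2 * w ^ 3 + 0.3 * w ^ 4 := by
  nlinarith [sq_nonneg (w - 1.5), sq_nonneg (w ^ 2 + w - 3), mul_nonneg hw (sq_nonneg (w - 1.5))]

section

variable {t : ℝ}

theorem sq_sqrt_three_mul (ht : 0 ≤ t) : Real.sqrt (3 * t) ^ 2 = 3 * t :=
  Real.sq_sqrt (by positivity)

theorem K_eq_quartic (ht : 0 ≤ t) :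
    K t = 6 - 6 * Real.sqrt (3 * t) ^ 2 + 2 * Real.sqrt (3 * t) ^ 3
      + 0.3 * Real.sqrt (3 * t) ^ 4 := by
  have hw := sq_sqrt_three_mul ht
  rw [K]
  linear_combination (6 - 2 * Real.sqrt (3 * t) - 0.3 * (Real.sqrt (3 * t) ^ 2 + 3 * t)) * hw

theorem K_pos (ht : 0 ≤ t) : 0 < K t :=
  K_eq_quartic ht ▸ quartic_pos (Real.sqrt_nonneg _)

theorem monge_ampere_eq₁ (ht : 0 ≤ t) :
    6 * p t * s t * x t - b t ^ 2 * (2 * s t + v t) - a t ^ 2 * (2 * x t + y t)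
      + 2 * a t * b t * c t = K t := by
  have hw := sq_sqrt_three_mul ht
  simp only [p, s, x, y, v, a, b, c, K]
  linear_combination (2 * Real.sqrt (3 * t) - 6 + 0.9 * t) * hw

theorem monge_ampere_eq₂ (ht : 0 ≤ t) :
    6 * q t * u t * y t - c t ^ 2 * (2 * q t + r t) - a t ^ 2 * (x t + 2 * y t)
      + 2 * a t * b t * c t = K t := by
  have hw := sq_sqrt_three_mul ht
  have hq : (6 : ℝ) * (1 + t) ≠ 0 := by positivity
  simp only [q, u, y, x, a, b, c, r, K]
  rw [mul_div_assoc', mul_div_cancel_left₀ _ hq]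
  linear_combination (2 * Real.sqrt (3 * t) - 6 - 4 * t) * hw

theorem v_pos (ht : t ≤ 1) : 0 < v t := by
  rw [v]
  linarith

theorem z_denom_pos (ht : t ∈ Set.Icc (0 : ℝ) 1) : 0 < 6 * (1 + 2 * t) * (1 - 0.9 * t) := by
  have hv := v_pos ht.2
  rw [v] at hv
  have : (0 : ℝ) < 1 + 2 * t := by linarith [ht.1]
  positivity

theorem monge_ampere_eq₃ (ht : t ∈ Set.Icc (0 : ℝ) 1) :
    6 * r t * v t * z t - c t ^ 2 * (q t + 2 * r t) - b t ^ 2 * (s t + 2 * v t)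
      + 2 * a t * b t * c t = K t := by
  have hw := sq_sqrt_three_mul ht.1
  simp only [q, v, s, z, a, b, c, r, K]
  rw [mul_div_assoc', mul_div_cancel_left₀ _ (z_denom_pos ht).ne']
  linear_combination (2 * Real.sqrt (3 * t) - 6 - 3.2 * t) * hw

theorem u_pos (ht : 0 ≤ t) : 0 < u t := by
  rw [u]
  positivity

theorem z_pos (ht : t ∈ Set.Icc (0 : ℝ) 1) : 0 < z t :=
  div_pos (by positivity) (z_denom_pos ht)

end

theorem stmt4 :
    (∀ t ∈ Set.Icc (0 : ℝ) 1,
      6 * p t * s t * x t - b t ^ 2 * (2 * s t + v t) - a t ^ 2 * (2 * x t + y t)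
        + 2 * a t * b t * c t = K t) ∧
    (∀ t ∈ Set.Icc (0 : ℝ) 1,
      6 * q t * u t * y t - c t ^ 2 * (2 * q t + r t) - a t ^ 2 * (x t + 2 * y t)
        + 2 * a t * b t * c t = K t) ∧
    (∀ t ∈ Set.Icc (0 : ℝ) 1,
      6 * r t * v t * z t - c t ^ 2 * (q t + 2 * r t) - b t ^ 2 * (s t + 2 * v t)
        + 2 * a t * b t * c t = K t) ∧
    (∀ t ∈ Set.Icc (0 : ℝ) 1,
      0 < p t ∧ 0 < q t ∧ 0 < r t ∧ 0 < s t ∧ 0 < u t ∧ 0 < v t ∧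
      0 < x t ∧ 0 < y t ∧ 0 < z t ∧ 0 < K t) ∧
    (q 0 = 1 ∧ r 0 = 1 ∧ u 0 = 1 ∧ v 0 = 1 ∧ a 0 = 0 ∧ b 0 = 0 ∧ c 0 = 0) ∧
    (3 * p 1 * x 1 - b 1 ^ 2 = 0) ∧
    (3 * p 0 * x 0 - b 0 ^ 2 = 3 ∧ (0 : ℝ) < 3) := by
  refine ⟨fun t ht => monge_ampere_eq₁ ht.1, fun t ht => monge_ampere_eq₂ ht.1,
    fun t ht => monge_ampere_eq₃ ht, fun t ht => ?_, ?_, ?_, ?_⟩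
  · have hq : 0 < q t := by rw [q]; linarith [ht.1]
    have hr : 0 < r t := by rw [r]; linarith [ht.1]
    exact ⟨one_pos, hq, hr, one_pos, u_pos ht.1, v_pos ht.2, one_pos, one_pos, z_pos ht,
      K_pos ht.1⟩
  · norm_num [q, r, u, v, a, b, c]
  · norm_num [p, x, b, sq_sqrt_three_mul]
  · norm_num [p, x, b]

end

end VbMAPath
end

section
/- Let p,q,r,s,u,v,x,y,z,a,b,c be real numbers, and set A₁ = diag(p,q,r), A₂ = diag(s,u,v), A₃ = diag(x,y,z), B₁₂ = a·E₁₂, B₁₃ = b·E₁₃, B₂₃ = c·E₂₃ (3×3 real matrices). With the twelve functions p(t) = s(t) = x(t) = y(t) = 1, q(t) = 1+t, r(t) = 1+2t, v(t) = 1−0.9t, a(t) = b(t) = c(t) = √(3t), u(t) = (6+14.7t²)/(6(1+t)), z(t) = (6+12.3t²)/(6(1+2t)(1−0.9t)) evaluated at any t ∈ [0,1], the matrix T(A₁,A₂,A₃,B₁₂,B₁₃,B₂₃) := {A₁,A₂,A₃} − {A₁,B₂₃,B₂₃ᵀ} − {A₂,B₁₃,B₁₃ᵀ} − {A₃,B₁₂,B₁₂ᵀ}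 + {B₁₃,B₁₂ᵀ,B₂₃ᵀ} + {B₁₃ᵀ,B₁₂,B₂₃} equals K(t)·Id₃ where K(t) = 6 − 18t + 2.7t² + 6t√(3t). -/
open Matrix

/-- The full symmetrizer {X,Y,Z} = sum over all six orderings. -/
def sym3 {m : Type*} [Fintype m] [DecidableEq m] (X Y Z : Matrix m m ℝ) : Matrix m m ℝ :=
  X * Y * Z + X * Z * Y + Y * X * Z + Y * Z * X + Z * X * Y + Z * Y * X

/-- The pointwise matrix form of `(√-1 F_H)³` in dimension three. -/
def TvbMA {m : Type*} [Fintype m] [DecidableEq m]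
    (A₁ A₂ A₃ B₁₂ B₁₃ B₂₃ : Matrix m m ℝ) : Matrix m m ℝ :=
  sym3 A₁ A₂ A₃ - sym3 A₁ B₂₃ B₂₃ᵀ - sym3 A₂ B₁₃ B₁₃ᵀ - sym3 A₃ B₁₂ B₁₂ᵀ
    + sym3 B₁₃ B₁₂ᵀ B₂₃ᵀ + sym3 B₁₃ᵀ B₁₂ B₂₃

namespace VbMAPath

noncomputable section

/-! For diagonal `Aᵢ` and the three strictly upper triangular `Bᵢⱼ`, `T` is diagonal. With
`a = b = c = √(3t)` the cubic term `2abc` is `6t√(3t)`, the first diagonal entry is `K t`, and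
`u`, `z` are exactly the values that make the second and third entries equal to it. -/

theorem TvbMA_diagonal_single (p q r s u v x y z a b c : ℝ) :
    TvbMA (diagonal ![p, q, r]) (diagonal ![s, u, v]) (diagonal ![x, y, z])
      (a • single (0 : Fin 3) 1 1) (b • single (0 : Fin 3) 2 1) (c • single (1 : Fin 3) 2 1) =
    diagonal ![6 * p * s * x - b ^ 2 * (2 * s + v) - a ^ 2 * (2 * x + y) + 2 * a * b * c,
      6 * q * u * y - c ^ 2 * (2 * q + r) - a ^ 2 * (x + 2 * y) + 2 * a * b * c,
      6 * r * v * z - c ^ 2 * (q + 2 * r) - b ^ 2 * (s + 2 * v) + 2 * a * b * c] := by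
  ext i j
  fin_cases i <;> fin_cases j <;>
    simp [TvbMA, sym3, mul_apply, Fin.sum_univ_three, single, diagonal] <;> ring

theorem stmt5 (t : ℝ) (ht : t ∈ Set.Icc (0 : ℝ) 1) :
    TvbMA (Matrix.diagonal ![p t, q t, r t]) (Matrix.diagonal ![s t, u t, v t])
      (Matrix.diagonal ![x t, y t, z t])
      (a t • Matrix.single (0 : Fin 3) (1 : Fin 3) (1 : ℝ))
      (b t • Matrix.single (0 : Fin 3) (2 : Fin 3) (1 : ℝ))
      (c t • Matrix.single (1 : Fin 3) (2 : Fin 3) (1 : ℝ)) =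
    K t • (1 : Matrix (Fin 3) (Fin 3) ℝ) := by
  obtain ⟨ht0, ht1⟩ := ht
  have hw : √(3 * t) ^ 2 = 3 * t := Real.sq_sqrt (by positivity)
  have hu : 6 * (1 + t) * u t = 6 + 14.7 * t ^ 2 := mul_div_cancel₀ _ (by positivity)
  have hz : 6 * (1 + 2 * t) * (1 - 0.9 * t) * z t = 6 + 12.3 * t ^ 2 :=
    mul_div_cancel₀ _ (by nlinarith)
  rw [TvbMA_diagonal_single, smul_one_eq_diagonal]
  congr 1
  ext i
  simp only [p, q, r, s, v, x, y, a, b, c, K]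
  generalize √(3 * t) = w at hw ⊢
  fin_cases i <;>
    simp only [Fin.zero_eta, Fin.mk_one, Fin.reduceFinMk, cons_val_zero, cons_val_one, cons_val]
  · linear_combination (2 * w - 6 + 0.9 * t) * hw
  · linear_combination hu + (2 * w - 6 - 4 * t) * hw
  · linear_combination hz + (2 * w - 6 - 3.2 * t) * hw

end

end VbMAPath
end

section
/- Let A₁,…,A_n be r×r Hermitian complex matrices, let k ∈ {1,…,n}, and let v ∈ ℂ^r satisfy (∑_{i≠k} A_i)·v = 0. Then v*·(∑_{1 ≤ i < j ≤ n} (A_iA_j + A_jA_i))·v = −∑_{i≠k} ‖A_i v‖², where ‖·‖ is the standard Euclidean norm on ℂ^r and v* denotes the conjugate transpose of v. -/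
/-! With `S = ∑ i, A i`, the pair sum is `S * S - ∑ i, A i * A i`. Since `S` is Hermitian and
`S *ᵥ v = A k *ᵥ v`, the quadratic form of `v` evaluates to `‖A k v‖² - ∑ i, ‖A i v‖²`, in which the
`k`-th term cancels. -/

open Matrix

theorem Finset.sum_filter_lt_add_swap_add_sum_diag {ι M : Type*} [Fintype ι] [LinearOrder ι]
    [AddCommMonoid M] (f : ι → ι → M) :
    ∑ ij ∈ Finset.univ.filter (fun ij : ι × ι => ij.1 < ij.2), (f ij.1 ij.2 + f ij.2 ij.1)
      + ∑ i, f i i = ∑ i, ∑ j, f i j := by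
  have htrichotomy : ∀ i j, f i j = (if i < j then f i j else 0) + (if j < i then f i j else 0)
      + (if i = j then f i j else 0) := by
    intro i j
    rcases lt_trichotomy i j with h | rfl | h
    · simp [h, h.not_gt, h.ne]
    · simp
    · simp [h, h.not_gt, h.ne']
  have hswap : ∑ i, ∑ j, (if j < i then f i j else 0) = ∑ i, ∑ j, (if i < j then f j i else 0) :=
    Finset.sum_comm
  rw [Finset.sum_congr rfl fun i _ => Finset.sum_congr rfl fun j _ => htrichotomy i j]
  simp only [Finset.sum_filter, Fintype.sum_prod_type, Finset.sum_add_distrib, hswap,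
    Finset.sum_ite_eq, Finset.mem_univ, if_true]

theorem Finset.sum_filter_lt_mul_add_mul_swap {ι R : Type*} [Fintype ι] [LinearOrder ι] [Ring R]
    (a : ι → R) :
    ∑ ij ∈ Finset.univ.filter (fun ij : ι × ι => ij.1 < ij.2), (a ij.1 * a ij.2 + a ij.2 * a ij.1)
      = (∑ i, a i) * (∑ i, a i) - ∑ i, a i * a i := by
  rw [Finset.sum_mul_sum, ← Finset.sum_filter_lt_add_swap_add_sum_diag (fun i j => a i * a j),
    add_sub_cancel_right]

theorem Matrix.IsHermitian.star_dotProduct_mul_mulVec {n R : Type*} [Fintype n] [CommSemiring R]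
    [StarRing R] {A : Matrix n n R} (hA : A.IsHermitian) (B : Matrix n n R) (v : n → R) :
    star v ⬝ᵥ ((A * B) *ᵥ v) = star (A *ᵥ v) ⬝ᵥ (B *ᵥ v) := by
  rw [← mulVec_mulVec, dotProduct_mulVec, star_mulVec, hA.eq]

theorem Matrix.star_dotProduct_self_eq_sum_norm_sq {n 𝕜 : Type*} [Fintype n] [RCLike 𝕜]
    (w : n → 𝕜) : star w ⬝ᵥ w = ((∑ j, ‖w j‖ ^ 2 : ℝ) : 𝕜) := by
  simp [dotProduct, RCLike.conj_mul]

theorem stmt8 (n r : ℕ) (A : Fin n → Matrix (Fin r) (Fin r) ℂ)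
    (hA : ∀ i, (A i).IsHermitian) (k : Fin n) (v : Fin r → ℂ)
    (hv : (∑ i ∈ Finset.univ.erase k, A i) *ᵥ v = 0) :
    star v ⬝ᵥ
        ((∑ ij ∈ Finset.univ.filter (fun ij : Fin n × Fin n => ij.1 < ij.2),
            (A ij.1 * A ij.2 + A ij.2 * A ij.1)) *ᵥ v)
      = -((∑ i ∈ Finset.univ.erase k, ∑ j : Fin r, ‖(A i *ᵥ v) j‖ ^ 2 : ℝ) : ℂ) := by
  have hsum_herm : (∑ i, A i).IsHermitian :=
    isHermitian_iff_isSelfAdjoint.2 <| isSelfAdjoint_sum _ fun i _ => (hA i).isSelfAdjoint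
  have hsum_mulVec : (∑ i, A i) *ᵥ v = A k *ᵥ v := by
    rw [← Finset.add_sum_erase _ _ (Finset.mem_univ k), add_mulVec, hv, add_zero]
  rw [Finset.sum_filter_lt_mul_add_mul_swap, sub_mulVec, dotProduct_sub, sum_mulVec,
    dotProduct_sum, hsum_herm.star_dotProduct_mul_mulVec, hsum_mulVec]
  simp only [(hA _).star_dotProduct_mul_mulVec, star_dotProduct_self_eq_sum_norm_sq,
    RCLike.ofReal_eq_complex_ofReal]
  rw [← Finset.add_sum_erase _ _ (Finset.mem_univ k)]
  push_cast
  ring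
end

section
/- Let n ≥ 2 and r ≥ 1. Let A_i : [0,1] → M_r(ℂ) (1 ≤ i ≤ n) and B_{ij} : [0,1] → M_r(ℂ) (1 ≤ i < j ≤ n) be continuous, with each A_i(t) Hermitian. Suppose that for every t ∈ [0,1] the matrix M(t) := ∑_{1 ≤ i < j ≤ n} (A_i(t)A_j(t) + A_j(t)A_i(t) − B_{ij}(t)B_{ij}(t)* − B_{ij}(t)*B_{ij}(t)) is positive definite, and that for every index k ∈ {1,…,n} the matrix ∑_{i≠k} A_i(0) is positive definite. Then for every t ∈ [0,1] and every k, the matrix ∑_{i≠k} A_i(t) is positive definite. -/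
/-!
Fix `k` and put `S(t) = ∑_{i ≠ k} A_i(t)`. The set of `t ∈ [0,1]` where `S(t)` is positive
definite is open, since positive definiteness is an open condition on Hermitian matrices
(a quadratic form positive on the compact unit sphere stays positive nearby). It is also
closed: a limit of positive definite matrices is positive semidefinite, and a positive
semidefinite `S(t)` is already definite. Indeed, if `S v = 0` then `w_i = A_i v` satisfy
`∑ w_i = w_k`, so for `M = sigmaTwo A B`,
`v* M v ≤ |∑ w_i|² - ∑ |w_i|² = -∑_{i ≠ k} |w_i|² ≤ 0`, contradicting `M > 0`.
Since `[0,1]` is connected and `S(0)` is positive definite, `S(t)` is positive definite for all `t`.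
-/

open Matrix ComplexOrder

open Topology Metric Finset

theorem Finset.sum_filter_lt_add_swap {ι M : Type*} [Fintype ι] [LinearOrder ι] [AddCommGroup M]
    (c : ι → ι → M) :
    ∑ p ∈ univ.filter (fun p : ι × ι => p.1 < p.2), (c p.1 p.2 + c p.2 p.1) =
      ∑ i, ∑ j, c i j - ∑ i, c i i := by
  have hswap : ∑ p ∈ univ.filter (fun p : ι × ι => p.1 < p.2), c p.2 p.1 =
      ∑ p ∈ univ.filter (fun p : ι × ι => p.2 < p.1), c p.1 p.2 :=
    sum_equiv (Equiv.prodComm ι ι) (by simp) (by simp)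
  have hsplit : ∀ i j, c i j =
      (if i < j then c i j else 0) + (if j < i then c i j else 0) + if i = j then c i j else 0 := by
    intro i j
    rcases lt_trichotomy i j with h | rfl | h
    · simp [h, h.ne, not_lt_of_gt h]
    · simp
    · simp [h, h.ne', not_lt_of_gt h]
  rw [sum_add_distrib, hswap, eq_sub_iff_add_eq]
  simp only [sum_filter, Fintype.sum_prod_type]
  conv_rhs => enter [2, i, 2, j]; rw [hsplit i j]
  simp only [sum_add_distrib, sum_ite_eq]
  simp

namespace Matrix

variable {m 𝕜 : Type*} [Fintype m] [RCLike 𝕜]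

theorem isClosed_setOf_posSemidef : IsClosed {M : Matrix m m 𝕜 | M.PosSemidef} := by
  have : {M : Matrix m m 𝕜 | M.PosSemidef} =
      {M | Mᴴ = M} ∩ ⋂ v : m → 𝕜, {M | 0 ≤ star v ⬝ᵥ M *ᵥ v} := by
    ext M
    simp [posSemidef_iff_dotProduct_mulVec, IsHermitian]
  rw [this]
  refine (isClosed_eq continuous_id.matrix_conjTranspose continuous_id).inter
    (isClosed_iInter fun v => isClosed_le continuous_const ?_)
  exact continuous_const.dotProduct (continuous_id.matrix_mulVec continuous_const)

theorem PosDef.eventually_re_pos_on_sphere {M : Matrix m m 𝕜} (hM : M.PosDef) :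
    ∀ᶠ N in 𝓝 M, ∀ v ∈ sphere (0 : m → 𝕜) 1, 0 < RCLike.re (star v ⬝ᵥ N *ᵥ v) := by
  have hq : Continuous fun p : Matrix m m 𝕜 × (m → 𝕜) => RCLike.re (star p.2 ⬝ᵥ p.1 *ᵥ p.2) :=
    RCLike.continuous_re.comp <| continuous_snd.star.dotProduct
      (continuous_fst.matrix_mulVec continuous_snd)
  refine (isCompact_sphere _ _).eventually_forall_of_forall_eventually fun v hv => ?_
  refine hq.continuousAt.eventually (lt_mem_nhds ?_)
  exact hM.re_dotProduct_pos (ne_zero_of_mem_unit_sphere ⟨v, hv⟩)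

theorem PosDef.eventually_posDef_of_isHermitian {M : Matrix m m 𝕜} (hM : M.PosDef) :
    ∀ᶠ N in 𝓝 M, N.IsHermitian → N.PosDef := by
  filter_upwards [hM.eventually_re_pos_on_sphere] with N hN hherm
  refine .of_dotProduct_mulVec_pos hherm fun v hv => ?_
  rw [RCLike.pos_iff]
  refine ⟨?_, hherm.im_star_dotProduct_mulVec_self v⟩
  have hv' : 0 < ‖v‖ := norm_pos_iff.mpr hv
  have hu := hN ((‖v‖⁻¹ : ℝ) • v) (by simp [norm_smul, hv'.ne'])
  rw [star_smul, star_trivial, mulVec_smul, smul_dotProduct, dotProduct_smul, RCLike.smul_re,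
    RCLike.smul_re] at hu
  exact pos_of_mul_pos_right (pos_of_mul_pos_right hu (inv_pos.2 hv').le) (inv_pos.2 hv').le

theorem _root_.IsPreconnected.posDef_of_forall_posSemidef_imp {X : Type*} [TopologicalSpace X]
    {s : Set X} (hs : IsPreconnected s) {f : X → Matrix m m 𝕜} (hf : ContinuousOn f s)
    (hherm : ∀ x ∈ s, (f x).IsHermitian) (hdef : ∀ x ∈ s, (f x).PosSemidef → (f x).PosDef)
    {x₀ : X} (hx₀ : x₀ ∈ s) (h₀ : (f x₀).PosDef) {x : X} (hx : x ∈ s) : (f x).PosDef := by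
  have hloc : ∀ y ∈ s, ∀ᶠ z in 𝓝[s] y, (f y).PosDef ↔ (f z).PosDef := by
    intro y hy
    by_cases hy' : (f y).PosDef
    · filter_upwards [(hf y hy).eventually hy'.eventually_posDef_of_isHermitian,
        self_mem_nhdsWithin] with z hz hzs
      exact iff_of_true hy' (hz (hherm z hzs))
    · have hy'' : f y ∈ {M : Matrix m m 𝕜 | M.PosSemidef}ᶜ := fun h => hy' (hdef y hy h)
      filter_upwards [(hf y hy).eventually (isClosed_setOf_posSemidef.isOpen_compl.mem_nhds hy'')]
        with z hz
      exact iff_of_false hy' fun h => hz h.posSemidef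
  refine (hs.induction₂' (fun y z => (f y).PosDef ↔ (f z).PosDef) ?_ ?_ hx₀ hx).1 h₀
  · intro y hy
    filter_upwards [hloc y hy] with z hz
    exact ⟨hz, hz.symm⟩
  · intro _ _ _ _ _ _ h₁ h₂
    exact h₁.trans h₂

variable {ι : Type*} [Fintype ι] [LinearOrder ι]

def sigmaTwo (A : ι → Matrix m m 𝕜) (B : ι → ι → Matrix m m 𝕜) : Matrix m m 𝕜 :=
  ∑ ij ∈ univ.filter (fun ij : ι × ι => ij.1 < ij.2),
    (A ij.1 * A ij.2 + A ij.2 * A ij.1 - B ij.1 ij.2 * (B ij.1 ij.2)ᴴ - (B ij.1 ij.2)ᴴ * B ij.1 ij.2)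

theorem star_dotProduct_mul_mulVec (X Y : Matrix m m 𝕜) (v : m → 𝕜) :
    star v ⬝ᵥ (X * Y) *ᵥ v = star (Xᴴ *ᵥ v) ⬝ᵥ (Y *ᵥ v) := by
  rw [← mulVec_mulVec, dotProduct_mulVec, star_mulVec, conjTranspose_conjTranspose]

theorem dotProduct_sigmaTwo_mulVec_le {A : ι → Matrix m m 𝕜} (hA : ∀ i, (A i).IsHermitian)
    (B : ι → ι → Matrix m m 𝕜) (v : m → 𝕜) :
    star v ⬝ᵥ sigmaTwo A B *ᵥ v ≤
      star (∑ i, A i *ᵥ v) ⬝ᵥ (∑ i, A i *ᵥ v) - ∑ i, star (A i *ᵥ v) ⬝ᵥ (A i *ᵥ v) := by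
  simp only [star_sum, sum_dotProduct, dotProduct_sum]
  rw [← sum_filter_lt_add_swap, sigmaTwo, sum_mulVec, dotProduct_sum]
  refine sum_le_sum fun p _ => ?_
  simp only [sub_mulVec, add_mulVec, dotProduct_sub, dotProduct_add, star_dotProduct_mul_mulVec,
    conjTranspose_conjTranspose, (hA _).eq]
  exact (sub_le_self _ (dotProduct_star_self_nonneg _)).trans
    ((sub_le_self _ (dotProduct_star_self_nonneg _)).trans_eq (add_comm _ _))

theorem PosSemidef.posDef_sum_erase {A : ι → Matrix m m 𝕜} {B : ι → ι → Matrix m m 𝕜}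
    (hA : ∀ i, (A i).IsHermitian) (hM : (sigmaTwo A B).PosDef) {k : ι}
    (hS : (∑ i ∈ univ.erase k, A i).PosSemidef) : (∑ i ∈ univ.erase k, A i).PosDef := by
  refine .of_dotProduct_mulVec_pos hS.1 fun v hv =>
    (hS.dotProduct_mulVec_nonneg v).lt_of_ne' fun h₀ => ?_
  have hker : ∑ i ∈ univ.erase k, A i *ᵥ v = 0 := by
    rw [← sum_mulVec]
    exact (hS.dotProduct_mulVec_zero_iff v).1 h₀
  have hsum : ∑ i, A i *ᵥ v = A k *ᵥ v := by
    rw [← add_sum_erase _ _ (mem_univ k), hker, add_zero]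
  have hpos := (hM.dotProduct_mulVec_pos hv).trans_le (dotProduct_sigmaTwo_mulVec_le hA B v)
  rw [hsum, ← add_sum_erase _ _ (mem_univ k), sub_add_cancel_left, neg_pos] at hpos
  exact hpos.not_ge (sum_nonneg fun i _ => dotProduct_star_self_nonneg _)

end Matrix

theorem stmt10_general (n r : ℕ)
    (A : Fin n → ℝ → Matrix (Fin r) (Fin r) ℂ)
    (B : Fin n → Fin n → ℝ → Matrix (Fin r) (Fin r) ℂ)
    (hAcont : ∀ i, ContinuousOn (A i) (Set.Icc (0 : ℝ) 1))
    (hAherm : ∀ i, ∀ t ∈ Set.Icc (0 : ℝ) 1, (A i t).IsHermitian)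
    (hpos : ∀ t ∈ Set.Icc (0 : ℝ) 1,
      (∑ ij ∈ Finset.univ.filter (fun ij : Fin n × Fin n => ij.1 < ij.2),
        (A ij.1 t * A ij.2 t + A ij.2 t * A ij.1 t
          - B ij.1 ij.2 t * (B ij.1 ij.2 t)ᴴ - (B ij.1 ij.2 t)ᴴ * B ij.1 ij.2 t)).PosDef)
    (h0 : ∀ k : Fin n, (∑ i ∈ Finset.univ.erase k, A i 0).PosDef) :
    ∀ t ∈ Set.Icc (0 : ℝ) 1, ∀ k : Fin n,
      (∑ i ∈ Finset.univ.erase k, A i t).PosDef := by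
  intro t ht k
  refine isPreconnected_Icc.posDef_of_forall_posSemidef_imp
    (continuousOn_finsetSum _ fun i _ => hAcont i)
    (fun s hs => isSelfAdjoint_sum _ fun i _ => hAherm i s hs)
    (fun s hs => PosSemidef.posDef_sum_erase (B := fun i j => B i j s) (fun i => hAherm i s hs)
      (hpos s hs))
    (Set.left_mem_Icc.2 zero_le_one) (h0 k) ht

theorem stmt10 (n r : ℕ) (hn : 2 ≤ n) (hr : 1 ≤ r)
    (A : Fin n → ℝ → Matrix (Fin r) (Fin r) ℂ)
    (B : Fin n → Fin n → ℝ → Matrix (Fin r) (Fin r) ℂ)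
    (hAcont : ∀ i, ContinuousOn (A i) (Set.Icc (0 : ℝ) 1))
    (hBcont : ∀ i j, ContinuousOn (B i j) (Set.Icc (0 : ℝ) 1))
    (hAherm : ∀ i, ∀ t ∈ Set.Icc (0 : ℝ) 1, (A i t).IsHermitian)
    (hpos : ∀ t ∈ Set.Icc (0 : ℝ) 1,
      (∑ ij ∈ Finset.univ.filter (fun ij : Fin n × Fin n => ij.1 < ij.2),
        (A ij.1 t * A ij.2 t + A ij.2 t * A ij.1 t
          - B ij.1 ij.2 t * (B ij.1 ij.2 t)ᴴ - (B ij.1 ij.2 t)ᴴ * B ij.1 ij.2 t)).PosDef)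
    (h0 : ∀ k : Fin n, (∑ i ∈ Finset.univ.erase k, A i 0).PosDef) :
    ∀ t ∈ Set.Icc (0 : ℝ) 1, ∀ k : Fin n,
      (∑ i ∈ Finset.univ.erase k, A i t).PosDef :=
  stmt10_general n r A B hAcont hAherm hpos h0
end

section
/- Let p,q,r,s,u,v,x,y,z,a,b,c be real numbers, and set A₁ = diag(p,q,r), A₂ = diag(s,u,v), A₃ = diag(x,y,z), B₁₂ = a·E₁₂, B₁₃ = b·E₁₃, B₂₃ = c·E₂₃ (3×3 real matrices). Then the combination T_J := {A₁,A₂,A₃} − {A₁,B₂₃,B₂₃ᵀ} − {A₂,B₁₃,B₁₃ᵀ} − {A₃,B₁₂,B₁₂ᵀ} + {B₁₃,B₁₂ᵀ,B₂₃ᵀ} + {B₁₃ᵀ,B₁₂,B₂₃} − {A₁,A₂} − {A₁,A₃} − {A₂,A₃} + {B₁₂,B₁₂ᵀ} + {B₁₃,B₁₃ᵀ} + {B₂₃,B₂₃ᵀ} equals the diagonal matrix diag(6psx − b²(2s+v−1) − a²(2x+y−1) + 2abc − 2(ps+sx+px), 6quy − c²(2q+r−1) − a²(x+2y−1) + 2abc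 − 2(qu+uy+qy), 6rvz − c²(q+2r−1) − b²(s+2v−1) + 2abc − 2(rv+vz+rz)). -/
/-!
Every term of `T_J` is diagonal. Products of diagonal matrices are diagonal; for a diagonal `D`,
each of the six products of `D`, `a E_ij` and `a E_ji` is a multiple of `E_ii` or `E_jj`; and for
distinct `i, j, k` the only nonzero products of `E_ij, E_jk, E_ki` are the three cyclic ones,
which give `E_ii, E_jj, E_kk`. The two cubic terms in the `B`'s are symmetrizers of such cycles
and contribute `abc` to every diagonal entry each; what remains is comparing three entries.
-/

open Matrix

/-- The anticommutator {X,Y} = XY + YX. -/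
def sym2 {m : Type*} [Fintype m] [DecidableEq m] (X Y : Matrix m m ℝ) : Matrix m m ℝ :=
  X * Y + Y * X

/-- The pointwise matrix form of the vector bundle J-equation in dimension three. -/
def TJ {m : Type*} [Fintype m] [DecidableEq m]
    (A₁ A₂ A₃ B₁₂ B₁₃ B₂₃ : Matrix m m ℝ) : Matrix m m ℝ :=
  sym3 A₁ A₂ A₃ - sym3 A₁ B₂₃ B₂₃ᵀ - sym3 A₂ B₁₃ B₁₃ᵀ - sym3 A₃ B₁₂ B₁₂ᵀ
    + sym3 B₁₃ B₁₂ᵀ B₂₃ᵀ + sym3 B₁₃ᵀ B₁₂ B₂₃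
    - sym2 A₁ A₂ - sym2 A₁ A₃ - sym2 A₂ A₃
    + sym2 B₁₂ B₁₂ᵀ + sym2 B₁₃ B₁₃ᵀ + sym2 B₂₃ B₂₃ᵀ

namespace Matrix

variable {n α : Type*} [Fintype n] [DecidableEq n] [NonUnitalNonAssocSemiring α]

theorem diagonal_mul_single (d : n → α) (i j : n) (a : α) :
    diagonal d * single i j a = single i j (d i * a) := by
  ext k l
  by_cases hk : i = k <;> simp [diagonal_mul, single, hk]

theorem single_mul_diagonal (d : n → α) (i j : n) (a : α) :
    single i j a * diagonal d = single i j (a * d j) := by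
  ext k l
  by_cases hl : j = l <;> simp [mul_diagonal, single, hl]

end Matrix

section Symmetrizers

variable {m : Type*} [Fintype m] [DecidableEq m]

theorem sym3_swap_right (X Y Z : Matrix m m ℝ) : sym3 X Y Z = sym3 X Z Y := by
  unfold sym3; abel

theorem sym3_diagonal (d₁ d₂ d₃ : m → ℝ) :
    sym3 (diagonal d₁) (diagonal d₂) (diagonal d₃) = diagonal (6 * d₁ * d₂ * d₃) := by
  ext i j
  by_cases h : i = j <;> simp [sym3, h]; ring

theorem sym2_diagonal (d₁ d₂ : m → ℝ) :
    sym2 (diagonal d₁) (diagonal d₂) = diagonal (2 * d₁ * d₂) := by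
  ext i j
  by_cases h : i = j <;> simp [sym2, h]; ring

theorem sym2_single_single (i j : m) (a : ℝ) :
    sym2 (single i j a) (single j i a) = single i i (a ^ 2) + single j j (a ^ 2) := by
  simp only [sym2, single_mul_single_same, sq]

theorem sym3_diagonal_single_single (d : m → ℝ) (i j : m) (a : ℝ) :
    sym3 (diagonal d) (single i j a) (single j i a) =
      single i i (a ^ 2 * (2 * d i + d j)) + single j j (a ^ 2 * (d i + 2 * d j)) := by
  have hi : a ^ 2 * (2 * d i + d j) = d i * a * a + a * d j * a + a * a * d i := by ring
  have hj : a ^ 2 * (d i + 2 * d j) = d j * a * a + a * d i * a + a * a * d j := by ring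
  simp only [sym3, single_mul_single_same, diagonal_mul_single,
    single_mul_diagonal, hi, hj, single_add]
  abel

theorem sym3_single_cycle {i j k : m} (hij : i ≠ j) (hjk : j ≠ k) (hki : k ≠ i) (a b c : ℝ) :
    sym3 (single i j a) (single j k b) (single k i c) =
      single i i (a * b * c) + single j j (a * b * c) + single k k (a * b * c) := by
  simp only [sym3, single_mul_single_same, single_mul_single_of_ne, ne_eq, hij, hjk, hki,
    not_false_eq_true, zero_mul, add_zero]
  ring_nf

end Symmetrizers

theorem stmt11 (p q r s u v x y z a b c : ℝ) :
    TJ (Matrix.diagonal ![p, q, r]) (Matrix.diagonal ![s, u, v])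
      (Matrix.diagonal ![x, y, z])
      (a • Matrix.single (0 : Fin 3) (1 : Fin 3) (1 : ℝ))
      (b • Matrix.single (0 : Fin 3) (2 : Fin 3) (1 : ℝ))
      (c • Matrix.single (1 : Fin 3) (2 : Fin 3) (1 : ℝ)) =
    Matrix.diagonal
      ![6 * p * s * x - b ^ 2 * (2 * s + v - 1) - a ^ 2 * (2 * x + y - 1)
          + 2 * a * b * c - 2 * (p * s + s * x + p * x),
        6 * q * u * y - c ^ 2 * (2 * q + r - 1) - a ^ 2 * (x + 2 * y - 1)
          + 2 * a * b * c - 2 * (q * u + u * y + q * y),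
        6 * r * v * z - c ^ 2 * (q + 2 * r - 1) - b ^ 2 * (s + 2 * v - 1)
          + 2 * a * b * c - 2 * (r * v + v * z + r * z)] := by
  simp only [smul_single, smul_eq_mul, mul_one, TJ, sym3_diagonal, sym2_diagonal,
    sym3_diagonal_single_single, sym2_single_single, transpose_single]
  rw [sym3_swap_right (single 0 2 b), sym3_single_cycle (by decide) (by decide) (by decide),
    sym3_single_cycle (by decide) (by decide) (by decide)]
  simp only [← diagonal_single, diagonal_add, diagonal_sub]
  congr 1
  funext i
  fin_cases i <;> simp <;> ring
end

section
/- Let r ≥ 3, let A₁, A₂, A₃ and B₁₂, B₁₃, B₂₃ be 3×3 real matrices satisfying T_J(A₁,A₂,A₃,B₁₂,B₁₃,B₂₃) = 0, and define r×r block-diagonal matrices A_i' := A_i ⊕ I_{r−3} and B_{ij}' := B_{ij} ⊕ 0_{r−3}. Then T_J(A₁',A₂',A₃',B₁₂',B₁₃',B₂₃') = 0. -/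
open Matrix

/-- Block-diagonal extension `X ⊕ Y`. -/
def blockDiag {k l : ℕ} (X : Matrix (Fin k) (Fin k) ℝ) (Y : Matrix (Fin l) (Fin l) ℝ) :
    Matrix (Fin k ⊕ Fin l) (Fin k ⊕ Fin l) ℝ :=
  Matrix.fromBlocks X 0 0 Y

lemma bd_mul {k l : ℕ} (X X' : Matrix (Fin k) (Fin k) ℝ)
    (Y Y' : Matrix (Fin l) (Fin l) ℝ) :
    _root_.blockDiag X Y * _root_.blockDiag X' Y' = _root_.blockDiag (X * X') (Y * Y') := by
  simp [_root_.blockDiag, Matrix.fromBlocks_multiply]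

lemma bd_add {k l : ℕ} (X X' : Matrix (Fin k) (Fin k) ℝ)
    (Y Y' : Matrix (Fin l) (Fin l) ℝ) :
    _root_.blockDiag X Y + _root_.blockDiag X' Y' = _root_.blockDiag (X + X') (Y + Y') := by
  simp [_root_.blockDiag, Matrix.fromBlocks_add]

lemma bd_neg {k l : ℕ} (X : Matrix (Fin k) (Fin k) ℝ) (Y : Matrix (Fin l) (Fin l) ℝ) :
    -_root_.blockDiag X Y = _root_.blockDiag (-X) (-Y) := by
  simp [_root_.blockDiag, Matrix.fromBlocks_neg]

lemma bd_sub {k l : ℕ} (X X' : Matrix (Fin k) (Fin k) ℝ)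
    (Y Y' : Matrix (Fin l) (Fin l) ℝ) :
    _root_.blockDiag X Y - _root_.blockDiag X' Y' = _root_.blockDiag (X - X') (Y - Y') := by
  simp only [sub_eq_add_neg, bd_neg, bd_add]

lemma bd_transpose {k l : ℕ} (X : Matrix (Fin k) (Fin k) ℝ)
    (Y : Matrix (Fin l) (Fin l) ℝ) :
    (_root_.blockDiag X Y)ᵀ = _root_.blockDiag Xᵀ Yᵀ := by
  simp [_root_.blockDiag, Matrix.fromBlocks_transpose]

lemma TJ_blockDiag {k l : ℕ} (A₁ A₂ A₃ B₁₂ B₁₃ B₂₃ : Matrix (Fin k) (Fin k) ℝ)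
    (C₁ C₂ C₃ D₁₂ D₁₃ D₂₃ : Matrix (Fin l) (Fin l) ℝ) :
    TJ (blockDiag A₁ C₁) (blockDiag A₂ C₂) (blockDiag A₃ C₃)
      (blockDiag B₁₂ D₁₂) (blockDiag B₁₃ D₁₃) (blockDiag B₂₃ D₂₃)
      = _root_.blockDiag (TJ A₁ A₂ A₃ B₁₂ B₁₃ B₂₃) (TJ C₁ C₂ C₃ D₁₂ D₁₃ D₂₃) := by
  simp only [TJ, sym3, sym2, bd_transpose, bd_mul, bd_add, bd_sub]

lemma TJ_one_zero {l : ℕ} :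
    TJ (1 : Matrix (Fin l) (Fin l) ℝ) 1 1 0 0 0 = 0 := by
  simp only [TJ, sym3, sym2, mul_one, one_mul, mul_zero, zero_mul, Matrix.transpose_zero,
    add_zero, zero_add, sub_zero]
  abel

theorem stmt17 (r : ℕ) (hr : 3 ≤ r)
    (A₁ A₂ A₃ B₁₂ B₁₃ B₂₃ : Matrix (Fin 3) (Fin 3) ℝ)
    (hT : TJ A₁ A₂ A₃ B₁₂ B₁₃ B₂₃ = 0) :
    TJ (blockDiag A₁ (1 : Matrix (Fin (r - 3)) (Fin (r - 3)) ℝ))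
      (blockDiag A₂ (1 : Matrix (Fin (r - 3)) (Fin (r - 3)) ℝ))
      (blockDiag A₃ (1 : Matrix (Fin (r - 3)) (Fin (r - 3)) ℝ))
      (blockDiag B₁₂ (0 : Matrix (Fin (r - 3)) (Fin (r - 3)) ℝ))
      (blockDiag B₁₃ (0 : Matrix (Fin (r - 3)) (Fin (r - 3)) ℝ))
      (blockDiag B₂₃ (0 : Matrix (Fin (r - 3)) (Fin (r - 3)) ℝ)) = 0 := by
  rw [TJ_blockDiag, hT, TJ_one_zero]
  simp [_root_.blockDiag]
end
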